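/- arXiv:2401.17090 — 7 statements merged into one kernel-verified Lean document; each statement's English description precedes it below -/
import Mathlib

section
/- For any integrable function f on [0,1], the integral over x in [0,1] of (x - 1/2)·(∫₀ˣ f(y)dy − ∫ₓ¹ f(y)dy) equals −∫₀¹ (x² − x) f(x) dx. In particular, if f is non-negative this quantity is non-negative. -/
open MeasureTheory intervalIntegral

/-- The selection gradient `∇E(f)(x) = ∫₀ˣ f − ∫ₓ¹ f`. -/
noncomputable def gradE (f : ℝ → ℝ) (x : ℝ) : ℝ :=
  (∫ y in (0:ℝ)..x, f y) - ∫ y in x..(1:ℝ), f y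

/-! With `F x = ∫₀ˣ f` we have `∇E(f) = 2F - F 1` on `[0, 1]`, and `∫₀¹ (x - 1/2) dx = 0`, so the
integral is `∫₀¹ F(x) (2x - 1) dx`. Integrating by parts against `x² - x`, which vanishes at `0`
and `1`, gives `-∫₀¹ (x² - x) f(x) dx`. This is legitimate for a merely integrable `f` because `F`
is absolutely continuous with `F' = f` almost everywhere. -/

theorem IntervalIntegrable.integral_primitive_mul_deriv {f g : ℝ → ℝ} {a b : ℝ}
    (hf : IntervalIntegrable f volume a b) (hg : AbsolutelyContinuousOnInterval g a b) :
    ∫ x in a..b, (∫ y in a..x, f y) * deriv g x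
      = (∫ y in a..b, f y) * g b - ∫ x in a..b, f x * g x := by
  have hF := hf.absolutelyContinuousOnInterval_intervalIntegral Set.left_mem_uIcc
  have hderiv : ∫ x in a..b, deriv (fun x ↦ ∫ y in a..x, f y) x * g x
      = ∫ x in a..b, f x * g x := by
    refine integral_congr_ae ?_
    filter_upwards [hf.ae_hasDerivAt_integral] with x hx hxI
    rw [(hx (Set.uIoc_subset_uIcc hxI) a Set.left_mem_uIcc).deriv]
  rw [hF.integral_mul_deriv_eq_deriv_mul hg, hderiv, integral_same, zero_mul, sub_zero]

theorem gradE_eq_of_mem_Icc {f : ℝ → ℝ} (hf : IntervalIntegrable f volume 0 1) {x : ℝ}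
    (hx : x ∈ Set.Icc (0:ℝ) 1) :
    gradE f x = 2 * (∫ y in (0:ℝ)..x, f y) - ∫ y in (0:ℝ)..1, f y := by
  have hx0 : IntervalIntegrable f volume 0 x :=
    hf.mono_set (by rw [Set.uIcc_of_le hx.1, Set.uIcc_of_le zero_le_one]; gcongr; exact hx.2)
  rw [gradE, ← integral_interval_sub_left hf hx0]
  ring

theorem deriv_sq_sub_self : deriv (fun x : ℝ ↦ x ^ 2 - x) = fun x ↦ 2 * x - 1 := by
  ext x
  simp

theorem integral_sub_half_mul_gradE {f : ℝ → ℝ} (hf : IntervalIntegrable f volume 0 1) :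
    ∫ x in (0:ℝ)..1, (x - 1/2) * gradE f x = -∫ x in (0:ℝ)..1, (x ^ 2 - x) * f x := by
  have hg : AbsolutelyContinuousOnInterval (fun x : ℝ ↦ x ^ 2 - x) 0 1 :=
    (by fun_prop : ContDiff ℝ 1 fun x : ℝ ↦ x ^ 2 - x).contDiffOn.absolutelyContinuousOnInterval
  have hparts := hf.integral_primitive_mul_deriv hg
  simp only [deriv_sq_sub_self, one_pow, sub_self, mul_zero, zero_sub] at hparts
  set F := fun x ↦ ∫ y in (0:ℝ)..x, f y
  have hpointwise : ∀ x ∈ Set.uIcc (0:ℝ) 1,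
      (x - 1/2) * gradE f x = F x * (2 * x - 1) - (x - 1/2) * F 1 := by
    intro x hx
    rw [Set.uIcc_of_le zero_le_one] at hx
    rw [gradE_eq_of_mem_Icc hf hx]
    ring
  have hFg : IntervalIntegrable (fun x ↦ F x * (2 * x - 1)) volume 0 1 :=
    ((continuousOn_primitive_interval' hf Set.left_mem_uIcc).mul (by fun_prop)).intervalIntegrable
  have hconst : IntervalIntegrable (fun x : ℝ ↦ (x - 1/2) * F 1) volume 0 1 :=
    (by fun_prop : Continuous fun x : ℝ ↦ (x - 1/2) * F 1).intervalIntegrable _ _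
  rw [integral_congr hpointwise, integral_sub hFg hconst, hparts,
    intervalIntegral.integral_mul_const]
  simp_rw [mul_comm (f _)]
  norm_num

theorem stmt0 (f : ℝ → ℝ)
    (hf : IntegrableOn f (Set.Icc (0:ℝ) 1)) :
    (∫ x in (0:ℝ)..1, (x - 1/2) * gradE f x)
      = -∫ x in (0:ℝ)..1, (x^2 - x) * f x ∧
    ((∀ x ∈ Set.Icc (0:ℝ) 1, 0 ≤ f x) →
      0 ≤ ∫ x in (0:ℝ)..1, (x - 1/2) * gradE f x) := by
  have hmain := integral_sub_half_mul_gradE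
    ((intervalIntegrable_iff_integrableOn_Icc_of_le zero_le_one).2 hf)
  refine ⟨hmain, fun hpos ↦ ?_⟩
  rw [hmain, ← intervalIntegral.integral_neg]
  refine integral_nonneg zero_le_one fun x hx ↦ ?_
  have hweight : 0 ≤ x - x ^ 2 := by nlinarith [hx.1, hx.2]
  nlinarith [mul_nonneg hweight (hpos x hx)]
end

section
/- Let A be the constrained selection gradient: Af(x) = ∫₀ˣ f − ∫ₓ¹ f − 12·H(w(f))·(x − 1/2)·∫₀¹ (y − 1/2)(∫₀ʸ f − ∫ᵧ¹ f) dy, where w(f) = ∫₀¹ (x − 1/2) f(x) dx and H is the Heaviside function. Then for f ∈ L^p[0,1] (1 ≤ p ≤ ∞), the only solutions of Af = λf with f not identically zero are: λ = 0 with f a constant function. -/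
open MeasureTheory intervalIntegral ENNReal

/-- The Heaviside function: `1` for `t ≥ 0`, `0` for `t < 0`. -/
noncomputable def heav (t : ℝ) : ℝ := if 0 ≤ t then 1 else 0

/-- The MCA-constraint functional `w(f) = ∫₀¹ (x − 1/2) f(x) dx`. -/
noncomputable def wfun (f : ℝ → ℝ) : ℝ := ∫ x in (0:ℝ)..1, (x - 1/2) * f x

/-- The constrained selection gradient `A`. -/
noncomputable def Aop (f : ℝ → ℝ) (x : ℝ) : ℝ :=
  gradE f x - 12 * heav (wfun f) * (x - 1/2) *
    ∫ y in (0:ℝ)..1, (y - 1/2) * gradE f y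

/-! Write `F x = ∫₀ˣ f`, `θ = ∫₀¹ (y - 1/2) ∇E(f)(y) dy` and `C = 12 H(w(f)) θ`. On `[0,1]`,
`Af = 2F - F 1 - C (x - 1/2)` is continuous.

If `λ = 0`, then `Af = 0` everywhere, so `F` is affine and `f` is a.e. constant.

If `λ ≠ 0`, then `g = λ⁻¹ Af - C/2` is continuous, equals `f - C/2` a.e., and satisfies
`g x = g 0 + (2/λ) ∫₀ˣ g`; hence `f = C/2 + a e^{2x/λ}` a.e., and `Af(0) + Af(1) = 0` gives
`C + a (1 + e^{2/λ}) = 0`. Testing the eigen-equation against `x - 1/2` gives `λ w = θ - C/12`: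
if `w ≥ 0` then `C = 12θ`, so `w = 0`; if `w < 0` then `C = 0`. Since
`∫₀¹ (x - 1/2) e^{mx} dx ≠ 0` for `m ≠ 0`, both cases force `a = C = 0`, i.e. `f = 0` a.e. -/

open Set Filter Real Topology

theorem intervalIntegral_congr_ae_restrict_Icc {f g : ℝ → ℝ} {a b : ℝ} (hab : a ≤ b)
    (h : f =ᵐ[volume.restrict (Icc a b)] g) : ∫ x in a..b, f x = ∫ x in a..b, g x := by
  simp only [integral_of_le hab, ← integral_Icc_eq_integral_Ioc]
  exact integral_congr_ae h

theorem MeasureTheory.IntegrableOn.intervalIntegrable_of_mem_Icc {f : ℝ → ℝ} {a b x y : ℝ}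
    (hf : IntegrableOn f (Icc a b)) (hx : x ∈ Icc a b) (hy : y ∈ Icc a b) :
    IntervalIntegrable f volume x y :=
  (hf.mono_set (uIcc_subset_Icc hx hy)).intervalIntegrable

theorem hasDerivWithinAt_integral_Ici {g : ℝ → ℝ} {a b x : ℝ} (hg : ContinuousOn g (Icc a b))
    (hx : x ∈ Ico a b) : HasDerivWithinAt (fun u => ∫ t in a..u, g t) (g x) (Ici x) x := by
  have hmem : Icc a b ∈ 𝓝[Ioi x] x := Icc_mem_nhdsGT_of_mem hx
  refine integral_hasDerivWithinAt_right (t := Ioi x) ?_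
    ⟨Icc a b, hmem, hg.aestronglyMeasurable measurableSet_Icc⟩
    ((hg x (Ico_subset_Icc_self hx)).mono_of_mem_nhdsWithin hmem)
  exact (hg.mono (uIcc_subset_Icc (left_mem_Icc.2 (hx.1.trans hx.2.le))
    (Ico_subset_Icc_self hx))).intervalIntegrable

theorem eq_mul_exp_of_eq_add_integral {g : ℝ → ℝ} {a b m : ℝ} (hg : ContinuousOn g (Icc a b))
    (h : ∀ x ∈ Icc a b, g x = g a + m * ∫ t in a..x, g t) :
    ∀ x ∈ Icc a b, g x = g a * exp (m * (x - a)) := by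
  have hg' : ∀ x ∈ Ico a b, HasDerivWithinAt g (m * g x) (Ici x) x := fun x hx =>
    (((hasDerivWithinAt_integral_Ici hg hx).const_mul m).const_add (g a)).congr_of_eventuallyEq
      (eventually_of_mem (Icc_mem_nhdsGE_of_mem hx) h) (h x (Ico_subset_Icc_self hx))
  set k : ℝ → ℝ := fun x => g x * exp (-(m * (x - a)))
  have hk : ∀ x ∈ Ico a b, HasDerivWithinAt k 0 (Ici x) x := by
    intro x hx
    have he : HasDerivAt (fun x => exp (-(m * (x - a)))) (exp (-(m * (x - a))) * -m) x := by
      simpa using (((hasDerivAt_id x).sub_const a).const_mul m).neg.exp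
    exact ((hg' x hx).mul he.hasDerivWithinAt).congr_deriv (by ring)
  have hk_cont : ContinuousOn k (Icc a b) := hg.mul (by fun_prop)
  intro x hx
  have hkx : g x * exp (-(m * (x - a))) = g a := by
    simpa [k] using constant_of_has_deriv_right_zero hk_cont hk x hx
  calc g x = g x * exp (-(m * (x - a))) * exp (m * (x - a)) := by
        rw [mul_assoc, ← exp_add, neg_add_cancel, exp_zero, mul_one]
    _ = g a * exp (m * (x - a)) := by rw [hkx]

theorem ae_restrict_Icc_eq_of_hasDerivAt_integral {f g : ℝ → ℝ} {a b : ℝ}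
    (hf : IntervalIntegrable f volume a b)
    (h : ∀ x ∈ Ioo a b, HasDerivAt (fun u => ∫ t in a..u, f t) (g x) x) :
    f =ᵐ[volume.restrict (Icc a b)] g := by
  rw [Measure.restrict_congr_set Ioo_ae_eq_Icc.symm, EventuallyEq,
    ae_restrict_iff' measurableSet_Ioo]
  filter_upwards [hf.ae_hasDerivAt_integral] with x hx hxI
  exact (hx (Icc_subset_uIcc (Ioo_subset_Icc_self hxI)) a left_mem_uIcc).unique (h x hxI)

theorem one_add_sub_one_mul_exp_pos {x : ℝ} (hx : x ≠ 0) : 0 < 1 + (x - 1) * exp x := by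
  have h := add_one_lt_exp (neg_ne_zero.2 hx)
  have : (1 - x) * exp x < 1 :=
    calc (1 - x) * exp x < exp (-x) * exp x := by gcongr; linarith
      _ = 1 := by rw [← exp_add, neg_add_cancel, exp_zero]
  linarith

theorem sub_two_mul_exp_add_ne_zero {m : ℝ} (hm : m ≠ 0) : (m - 2) * exp m + m + 2 ≠ 0 := by
  set φ : ℝ → ℝ := fun x => (x - 2) * exp x + x + 2
  have hφ : ∀ x, HasDerivAt φ (1 + (x - 1) * exp x) x := fun x =>
    ((((hasDerivAt_id x).sub_const 2).mul (hasDerivAt_exp x)).add (hasDerivAt_id x)).add_const 2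
      |>.congr_deriv (by simp only [id]; ring)
  have hmono : ∀ s : Set ℝ, Convex ℝ s → (0 : ℝ) ∉ interior s → StrictMonoOn φ s :=
    fun s hs h0 => strictMonoOn_of_deriv_pos hs (fun x _ => (hφ x).continuousAt.continuousWithinAt)
      fun x hx => by
        rw [(hφ x).deriv]
        exact one_add_sub_one_mul_exp_pos (ne_of_mem_of_not_mem hx h0)
  have hφ0 : φ 0 = 0 := by norm_num [φ]
  rcases hm.lt_or_gt with hneg | hpos
  · have := hmono (Iic 0) (convex_Iic 0) (by simp) (mem_Iic.2 hneg.le) (mem_Iic.2 le_rfl) hneg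
    exact (this.trans_eq hφ0).ne
  · have := hmono (Ici 0) (convex_Ici 0) (by simp) (mem_Ici.2 le_rfl) (mem_Ici.2 hpos.le) hpos
    exact (hφ0.symm.trans_lt this).ne'

theorem integral_sub_half_mul_const_add_exp (c a : ℝ) {m : ℝ} (hm : m ≠ 0) :
    ∫ x in (0:ℝ)..1, (x - 1/2) * (c + a * exp (m * x))
      = a * (((m - 2) * exp m + m + 2) / (2 * m ^ 2)) := by
  have hderiv : ∀ x, HasDerivAt
      (fun x => c * (x ^ 2 / 2 - x / 2) + a * (((x - 1/2) / m - 1 / m ^ 2) * exp (m * x)))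
      ((x - 1/2) * (c + a * exp (m * x))) x := by
    intro x
    have hpoly := ((hasDerivAt_pow 2 x).div_const 2).sub ((hasDerivAt_id x).div_const 2)
    have hexp := ((((hasDerivAt_id x).sub_const (1/2)).div_const m).sub_const (1 / m ^ 2)).mul
      ((hasDerivAt_id x).const_mul m).exp
    refine ((hpoly.const_mul c).add (hexp.const_mul a)).congr_deriv ?_
    simp only [id]
    field_simp
    ring
  rw [integral_eq_sub_of_hasDerivAt (fun x _ => hderiv x)
    (Continuous.intervalIntegrable (by fun_prop) _ _)]
  field_simp
  norm_num
  ring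

noncomputable def gradMoment (f : ℝ → ℝ) : ℝ := ∫ y in (0:ℝ)..1, (y - 1/2) * gradE f y

noncomputable def slopeCoeff (f : ℝ → ℝ) : ℝ := 12 * heav (wfun f) * gradMoment f

theorem Aop_eq (f : ℝ → ℝ) (x : ℝ) : Aop f x = gradE f x - slopeCoeff f * (x - 1/2) := by
  unfold Aop slopeCoeff gradMoment
  ring

theorem Aop_zero_add_Aop_one (f : ℝ → ℝ) : Aop f 0 + Aop f 1 = 0 := by
  simp only [Aop_eq, gradE, integral_same]
  ring

theorem wfun_eq_zero_or_slopeCoeff_eq_zero {f : ℝ → ℝ} {lam : ℝ} (hlam : lam ≠ 0)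
    (h : lam * wfun f = gradMoment f - slopeCoeff f / 12) : wfun f = 0 ∨ slopeCoeff f = 0 := by
  unfold slopeCoeff heav at *
  split_ifs at h ⊢
  · left
    simpa [hlam] using h
  · right
    ring

section

variable {f : ℝ → ℝ}

theorem Aop_eq_of_mem_Icc {x : ℝ} (hf : IntegrableOn f (Icc 0 1)) (hx : x ∈ Icc (0:ℝ) 1) :
    Aop f x = 2 * (∫ t in (0:ℝ)..x, f t) - (∫ t in (0:ℝ)..1, f t) - slopeCoeff f * (x - 1/2) := by
  have h01 : (0:ℝ) ∈ Icc (0:ℝ) 1 := left_mem_Icc.2 zero_le_one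
  have h11 : (1:ℝ) ∈ Icc (0:ℝ) 1 := right_mem_Icc.2 zero_le_one
  rw [Aop_eq, gradE, ← integral_add_adjacent_intervals
    (hf.intervalIntegrable_of_mem_Icc h01 hx)
    (hf.intervalIntegrable_of_mem_Icc hx h11)]
  ring

theorem continuousOn_Aop (hf : IntegrableOn f (Icc 0 1)) : ContinuousOn (Aop f) (Icc 0 1) := by
  have hF : ContinuousOn (fun x => ∫ t in (0:ℝ)..x, f t) (Icc 0 1) := by
    simpa [uIcc_of_le zero_le_one] using
      continuousOn_primitive_interval (a := 0) (b := 1) (μ := volume) (f := f)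
        (by rwa [uIcc_of_le zero_le_one])
  exact ContinuousOn.congr (by fun_prop) fun x hx => Aop_eq_of_mem_Icc hf hx

theorem integral_sub_half_mul_Aop (hf : IntegrableOn f (Icc 0 1)) :
    ∫ x in (0:ℝ)..1, (x - 1/2) * Aop f x = gradMoment f - slopeCoeff f / 12 := by
  have hA : IntervalIntegrable (fun x => (x - 1/2) * Aop f x) volume 0 1 :=
    ((continuousOn_id.sub continuousOn_const).mul (continuousOn_Aop hf)).intervalIntegrable_of_Icc
      zero_le_one
  have hsq : ∫ x in (0:ℝ)..1, (x - 1/2) ^ 2 = 1/12 := by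
    norm_num [intervalIntegral.integral_comp_sub_right (fun x => x ^ 2)]
  have hmoment : gradMoment f
      = ∫ x in (0:ℝ)..1, ((x - 1/2) * Aop f x + slopeCoeff f * (x - 1/2) ^ 2) := by
    unfold gradMoment
    congr 1 with x
    rw [Aop_eq]
    ring
  rw [hmoment, integral_add hA (Continuous.intervalIntegrable (by fun_prop) _ _),
    intervalIntegral.integral_const_mul, hsq]
  ring

theorem exists_ae_eq_const_of_Aop_ae_eq_zero (hf : IntegrableOn f (Icc 0 1))
    (h : Aop f =ᵐ[volume.restrict (Icc 0 1)] 0) :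
    ∃ c : ℝ, f =ᵐ[volume.restrict (Icc (0:ℝ) 1)] fun _ => c := by
  have hA : EqOn (Aop f) 0 (Icc 0 1) :=
    Measure.eqOn_Icc_of_ae_eq volume zero_ne_one h (continuousOn_Aop hf) continuousOn_const
  have hprim : EqOn (fun u => ∫ t in (0:ℝ)..u, f t)
      (fun u => ((∫ t in (0:ℝ)..1, f t) + slopeCoeff f * (u - 1/2)) / 2) (Icc 0 1) := by
    intro u hu
    have := hA hu
    rw [Aop_eq_of_mem_Icc hf hu] at this
    simp only [Pi.zero_apply] at this
    linarith
  refine ⟨slopeCoeff f / 2, ae_restrict_Icc_eq_of_hasDerivAt_integral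
    ((intervalIntegrable_iff_integrableOn_Icc_of_le zero_le_one).2 hf) fun x hx => ?_⟩
  refine HasDerivAt.congr_of_eventuallyEq ?_ (eventually_of_mem (Icc_mem_nhds hx.1 hx.2) hprim)
  exact ((((hasDerivAt_id x).sub_const (1/2)).const_mul (slopeCoeff f)).const_add _).div_const 2
    |>.congr_deriv (by simp)

theorem exists_ae_eq_const_add_exp_of_Aop_ae_eq_mul (hf : IntegrableOn f (Icc 0 1)) {lam : ℝ}
    (hlam : lam ≠ 0) (h : Aop f =ᵐ[volume.restrict (Icc 0 1)] fun x => lam * f x) :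
    ∃ a : ℝ,
      (f =ᵐ[volume.restrict (Icc (0:ℝ) 1)] fun x => slopeCoeff f / 2 + a * exp (2 / lam * x)) ∧
      slopeCoeff f + a * (1 + exp (2 / lam)) = 0 := by
  set C := slopeCoeff f
  set g : ℝ → ℝ := fun x => lam⁻¹ * Aop f x - C / 2
  have hfg : f =ᵐ[volume.restrict (Icc 0 1)] fun x => C / 2 + g x := by
    filter_upwards [h] with x hx
    simp [g, hx, hlam]
  have hg : ContinuousOn g (Icc 0 1) :=
    (continuousOn_const.mul (continuousOn_Aop hf)).sub continuousOn_const
  have hprim :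
      ∀ x ∈ Icc (0:ℝ) 1, ∫ t in (0:ℝ)..x, f t = C / 2 * x + ∫ t in (0:ℝ)..x, g t := by
    intro x hx
    rw [intervalIntegral_congr_ae_restrict_Icc hx.1
      (ae_restrict_of_ae_restrict_of_subset (Icc_subset_Icc le_rfl hx.2) hfg),
      integral_add intervalIntegrable_const
        ((hg.mono (Icc_subset_Icc le_rfl hx.2)).intervalIntegrable_of_Icc hx.1),
      intervalIntegral.integral_const, smul_eq_mul, sub_zero, mul_comm]
  have h0 : (0:ℝ) ∈ Icc (0:ℝ) 1 := left_mem_Icc.2 zero_le_one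
  have hode : ∀ x ∈ Icc (0:ℝ) 1, g x = g 0 + 2 / lam * ∫ t in (0:ℝ)..x, g t := by
    intro x hx
    simp only [g, Aop_eq_of_mem_Icc hf hx, Aop_eq_of_mem_Icc hf h0, hprim x hx, integral_same]
    field_simp
    ring
  have hexp := eq_mul_exp_of_eq_add_integral hg hode
  refine ⟨g 0, ?_, ?_⟩
  · filter_upwards [hfg, ae_restrict_mem measurableSet_Icc] with x hx hxI
    rw [hx, hexp x hxI, sub_zero]
  · have hsum : g 0 + g 1 = -C := by
      simp only [g]
      linear_combination lam⁻¹ * Aop_zero_add_Aop_one f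
    have h1 := hexp 1 (right_mem_Icc.2 zero_le_one)
    rw [sub_zero, mul_one] at h1
    linear_combination hsum - h1

theorem ae_eq_zero_of_Aop_ae_eq_mul (hf : IntegrableOn f (Icc 0 1)) {lam : ℝ} (hlam : lam ≠ 0)
    (h : Aop f =ᵐ[volume.restrict (Icc 0 1)] fun x => lam * f x) :
    f =ᵐ[volume.restrict (Icc (0:ℝ) 1)] fun _ => 0 := by
  obtain ⟨a, hfa, hbd⟩ := exists_ae_eq_const_add_exp_of_Aop_ae_eq_mul hf hlam h
  set m := 2 / lam
  have hm : m ≠ 0 := div_ne_zero two_ne_zero hlam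
  have hw : wfun f = a * (((m - 2) * exp m + m + 2) / (2 * m ^ 2)) := by
    rw [wfun, ← integral_sub_half_mul_const_add_exp (slopeCoeff f / 2) a hm]
    exact intervalIntegral_congr_ae_restrict_Icc zero_le_one
      (hfa.mono fun x hx => by simp only [hx])
  have hmoment : lam * wfun f = gradMoment f - slopeCoeff f / 12 := by
    rw [← integral_sub_half_mul_Aop hf, wfun, ← intervalIntegral.integral_const_mul]
    exact intervalIntegral_congr_ae_restrict_Icc zero_le_one
      (h.mono fun x hx => by simp only [hx]; ring)
  have ha : a = 0 := by
    rcases wfun_eq_zero_or_slopeCoeff_eq_zero hlam hmoment with hw0 | hC0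
    · simpa [hw0, hm, sub_two_mul_exp_add_ne_zero hm] using hw
    · rw [hC0, zero_add] at hbd
      exact (mul_eq_zero.1 hbd).resolve_right (by positivity)
  have hC : slopeCoeff f = 0 := by simpa [ha] using hbd
  filter_upwards [hfa] with x hx
  rw [hx, ha, hC]
  ring

end

/-- The only eigenfunctions of `A` on `L^p[0,1]` are the constant functions,
with eigenvalue `0`. -/
theorem stmt6 (p : ℝ≥0∞) (hp : 1 ≤ p) (f : ℝ → ℝ) (lam : ℝ)
    (hf : MemLp f p (volume.restrict (Set.Icc (0:ℝ) 1)))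
    (hnz : ¬ f =ᵐ[volume.restrict (Set.Icc (0:ℝ) 1)] (fun _ => (0:ℝ)))
    (heig : Aop f =ᵐ[volume.restrict (Set.Icc (0:ℝ) 1)] (fun x => lam * f x)) :
    lam = 0 ∧ ∃ c : ℝ, f =ᵐ[volume.restrict (Set.Icc (0:ℝ) 1)] (fun _ => c) := by
  have hfi : IntegrableOn f (Icc 0 1) := hf.integrable hp
  by_cases hlam : lam = 0
  · subst hlam
    exact ⟨rfl, exists_ae_eq_const_of_Aop_ae_eq_zero hfi
      (heig.trans (.of_forall fun x => zero_mul (f x)))⟩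
  · exact absurd (ae_eq_zero_of_Aop_ae_eq_mul hfi hlam heig) hnz
end

section
/- For functions f with MCA(f) = 1/2, the L² adjoint of the constrained selection gradient A is given by A*v(x) = −(∫₀ˣ v(y)dy − ∫ₓ¹ v(y)dy) + 12(x² − x)∫₀¹ (y − 1/2) v(y) dy; that is, ⟨Au, v⟩ = ⟨u, A*v⟩ for all u, v ∈ L²[0,1]. -/
open MeasureTheory intervalIntegral ENNReal

/-- The mean competitive ability. -/
noncomputable def mca (f : ℝ → ℝ) : ℝ :=
  (∫ x in (0:ℝ)..1, x * f x) / (∫ x in (0:ℝ)..1, f x)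

/-- The `L²` adjoint of `A`. -/
noncomputable def Astar (v : ℝ → ℝ) (x : ℝ) : ℝ :=
  -gradE v x + 12 * (x^2 - x) * ∫ y in (0:ℝ)..1, (y - 1/2) * v y

/-!
Integrating by parts the absolutely continuous primitives of `u, v ∈ L¹[0,1]` shows that `∇E` is
antisymmetric: `⟨∇E u, v⟩ = -⟨u, ∇E v⟩`. Since `MCA(u) = 1/2` forces `w(u) = 0`, the Heaviside
factor in `A` equals `1`, and the rank-one correction transposes because `∇E(y - 1/2) = y² - y`.
-/

open Set

theorem integral_primitive_mul_add_mul_primitive {u v : ℝ → ℝ} {a b : ℝ}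
    (hu : IntervalIntegrable u volume a b) (hv : IntervalIntegrable v volume a b) :
    (∫ x in a..b, (∫ y in a..x, u y) * v x) + ∫ x in a..b, u x * ∫ y in a..x, v y
      = (∫ x in a..b, u x) * ∫ x in a..b, v x := by
  set U := fun x => ∫ y in a..x, u y
  set V := fun x => ∫ y in a..x, v y
  have hderiv {w : ℝ → ℝ} (hw : IntervalIntegrable w volume a b) :
      ∀ᵐ x, x ∈ uIoc a b → deriv (fun x => ∫ y in a..x, w y) x = w x := by
    filter_upwards [hw.ae_hasDerivAt_integral] with x hx hxab
    exact (hx (uIoc_subset_uIcc hxab) a left_mem_uIcc).deriv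
  have hUdV : ∫ x in a..b, U x * deriv V x = ∫ x in a..b, U x * v x :=
    integral_congr_ae ((hderiv hv).mono fun x hx hxab => by rw [hx hxab])
  have hdUV : ∫ x in a..b, deriv U x * V x = ∫ x in a..b, u x * V x :=
    integral_congr_ae ((hderiv hu).mono fun x hx hxab => by rw [hx hxab])
  have hparts := AbsolutelyContinuousOnInterval.integral_mul_deriv_eq_deriv_mul
    (hu.absolutelyContinuousOnInterval_intervalIntegral left_mem_uIcc)
    (hv.absolutelyContinuousOnInterval_intervalIntegral left_mem_uIcc)
  rw [hUdV, hdUV] at hparts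
  simp only [U, V, integral_same, zero_mul, sub_zero] at hparts
  linarith

theorem gradE_eq_two_mul_primitive_sub {u : ℝ → ℝ} (hu : IntervalIntegrable u volume 0 1)
    {x : ℝ} (hx : x ∈ uIcc 0 1) :
    gradE u x = 2 * (∫ y in (0:ℝ)..x, u y) - ∫ y in (0:ℝ)..1, u y := by
  have h0x : IntervalIntegrable u volume 0 x := hu.mono_set (uIcc_subset_uIcc_left hx)
  have hx1 : IntervalIntegrable u volume x 1 := hu.mono_set (uIcc_subset_uIcc_right hx)
  rw [gradE, ← integral_add_adjacent_intervals h0x hx1]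
  ring

theorem continuousOn_gradE {u : ℝ → ℝ} (hu : IntervalIntegrable u volume 0 1) :
    ContinuousOn (gradE u) (uIcc 0 1) :=
  ((continuousOn_const.mul (continuousOn_primitive_interval' hu left_mem_uIcc)).sub
    continuousOn_const).congr fun _ hx => gradE_eq_two_mul_primitive_sub hu hx

theorem integral_gradE_mul_eq_neg {u v : ℝ → ℝ} (hu : IntervalIntegrable u volume 0 1)
    (hv : IntervalIntegrable v volume 0 1) :
    ∫ x in (0:ℝ)..1, gradE u x * v x = -∫ x in (0:ℝ)..1, u x * gradE v x := by
  have hUv := hv.continuousOn_mul (continuousOn_primitive_interval' hu left_mem_uIcc)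
  have huV := hu.mul_continuousOn (continuousOn_primitive_interval' hv left_mem_uIcc)
  have hl : ∫ x in (0:ℝ)..1, gradE u x * v x = ∫ x in (0:ℝ)..1,
      (2 * ((∫ y in (0:ℝ)..x, u y) * v x) - (∫ y in (0:ℝ)..1, u y) * v x) :=
    integral_congr fun x hx => by simp only [gradE_eq_two_mul_primitive_sub hu hx]; ring
  have hr : ∫ x in (0:ℝ)..1, u x * gradE v x = ∫ x in (0:ℝ)..1,
      (2 * (u x * ∫ y in (0:ℝ)..x, v y) - u x * ∫ y in (0:ℝ)..1, v y) :=
    integral_congr fun x hx => by simp only [gradE_eq_two_mul_primitive_sub hv hx]; ring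
  rw [hl, hr, integral_sub (hUv.const_mul 2) (hv.const_mul _),
    integral_sub (huV.const_mul 2) (hu.mul_const _), intervalIntegral.integral_const_mul,
    intervalIntegral.integral_const_mul, intervalIntegral.integral_const_mul,
    intervalIntegral.integral_mul_const]
  linear_combination 2 * integral_primitive_mul_add_mul_primitive hu hv

theorem gradE_sub_half (x : ℝ) : gradE (fun y => y - 1/2) x = x ^ 2 - x := by
  simp only [gradE]
  rw [integral_sub intervalIntegral.intervalIntegrable_id intervalIntegrable_const,
    integral_sub intervalIntegral.intervalIntegrable_id intervalIntegrable_const,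
    integral_id, integral_id, intervalIntegral.integral_const, intervalIntegral.integral_const,
    smul_eq_mul, smul_eq_mul]
  ring

theorem wfun_eq_zero_of_mca_eq_half {f : ℝ → ℝ} (hf : IntervalIntegrable f volume 0 1)
    (h : mca f = 1/2) : wfun f = 0 := by
  -- `mca f` would be `x / 0 = 0` if the mass vanished.
  have hmass : (∫ x in (0:ℝ)..1, f x) ≠ 0 := fun h0 => by norm_num [mca, h0] at h
  rw [mca, div_eq_iff hmass] at h
  simp only [wfun, sub_mul]
  rw [integral_sub (hf.continuousOn_mul (continuousOn_id' _)) (hf.const_mul _),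
    intervalIntegral.integral_const_mul, h]
  ring

theorem stmt9_general (u v : ℝ → ℝ)
    (hu : MemLp u 2 (volume.restrict (Set.Icc (0:ℝ) 1)))
    (hv : MemLp v 2 (volume.restrict (Set.Icc (0:ℝ) 1)))
    (hmca : mca u = 1/2) :
    ∫ x in (0:ℝ)..1, Aop u x * v x = ∫ x in (0:ℝ)..1, u x * Astar v x := by
  have hui : IntervalIntegrable u volume 0 1 :=
    (intervalIntegrable_iff_integrableOn_Icc_of_le zero_le_one).2 (hu.integrable one_le_two)
  have hvi : IntervalIntegrable v volume 0 1 :=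
    (intervalIntegrable_iff_integrableOn_Icc_of_le zero_le_one).2 (hv.integrable one_le_two)
  have hheav : heav (wfun u) = 1 := by simp [heav, wfun_eq_zero_of_mca_eq_half hui hmca]
  have hw : ∫ y in (0:ℝ)..1, (y - 1/2) * gradE u y = -∫ x in (0:ℝ)..1, (x ^ 2 - x) * u x := by
    simp only [mul_comm _ (gradE u _), mul_comm _ (u _)]
    have h := integral_gradE_mul_eq_neg hui
      ((by fun_prop : Continuous fun y : ℝ => y - 1/2).intervalIntegrable 0 1)
    simpa only [gradE_sub_half] using h
  have hL : ∫ x in (0:ℝ)..1, Aop u x * v x = (∫ x in (0:ℝ)..1, gradE u x * v x)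
      - 12 * (∫ y in (0:ℝ)..1, (y - 1/2) * gradE u y) * ∫ x in (0:ℝ)..1, (x - 1/2) * v x := by
    rw [← intervalIntegral.integral_const_mul, ← integral_sub
      (hvi.continuousOn_mul (continuousOn_gradE hui))
      ((hvi.continuousOn_mul (by fun_prop)).const_mul _)]
    exact integral_congr fun x _ => by simp only [Aop, hheav]; ring
  have hR : ∫ x in (0:ℝ)..1, u x * Astar v x
      = 12 * (∫ y in (0:ℝ)..1, (y - 1/2) * v y) * (∫ x in (0:ℝ)..1, (x ^ 2 - x) * u x)
        - ∫ x in (0:ℝ)..1, u x * gradE v x := by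
    rw [← intervalIntegral.integral_const_mul, ← integral_sub
      ((hui.continuousOn_mul (g := fun x => x ^ 2 - x) (by fun_prop)).const_mul _)
      (hui.mul_continuousOn (continuousOn_gradE hvi))]
    exact integral_congr fun x _ => by simp only [Astar]; ring
  rw [hL, hR, hw, integral_gradE_mul_eq_neg hui hvi]
  ring

/-- `⟨Au, v⟩ = ⟨u, A*v⟩` for `u` with `MCA(u) = 1/2` and all `v ∈ L²[0,1]`. -/
theorem stmt9 (u v : ℝ → ℝ)
    (hu : MemLp u 2 (volume.restrict (Set.Icc (0:ℝ) 1)))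
    (hv : MemLp v 2 (volume.restrict (Set.Icc (0:ℝ) 1)))
    (hint : (∫ x in (0:ℝ)..1, u x) ≠ 0)
    (hmca : mca u = 1/2) :
    ∫ x in (0:ℝ)..1, Aop u x * v x = ∫ x in (0:ℝ)..1, u x * Astar v x :=
  stmt9_general u v hu hv hmca
end

section
/- Let α : [0,∞) → L²[0,1] solve the constrained adaptive dynamics α' = Aα with initial data f₀ satisfying MCA(f₀) = 1/2 and ∫₀¹ f₀ ≠ 0. Then ‖α(t)‖_{L²} is constant in t. -/
/-! The constraint functional `w(α t)` vanishes at `t = 0` (that is `MCA = 1/2`), and whenever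
it is nonnegative the Heaviside switch is on, which makes `Aα` orthogonal to the weight `x - 1/2`;
so `w(α t)` never becomes positive. Once `w ≤ 0`, the correction term of `⟨α, Aα⟩`, namely
`-12 H(w) w ∫ (y - 1/2) ∇E(α)`, vanishes, while `⟨f, ∇E f⟩ = E[f, f] = 0` because it is the
integral of `f x f y sign (x - y)`, which is antisymmetric in `(x, y)`. Hence
`d/dt ‖α‖² = 2 ⟨α, Aα⟩ = 0`. -/

open MeasureTheory intervalIntegral ENNReal

open Set

theorem Real.measurable_sign : Measurable Real.sign :=
  Measurable.ite measurableSet_Iio measurable_const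
    (Measurable.ite measurableSet_Ioi measurable_const measurable_const)

theorem setIntegral_Icc_eq_intervalIntegral {a b : ℝ} (hab : a ≤ b) (f : ℝ → ℝ) :
    ∫ x in Icc a b, f x = ∫ x in a..b, f x := by
  rw [intervalIntegral.integral_of_le hab, integral_Icc_eq_integral_Ioc]

theorem integral_prod_eq_zero_of_swap_eq_neg {X : Type*} [MeasurableSpace X] {μ : Measure X}
    [SFinite μ] {K : X × X → ℝ} (hK : ∀ p, K p.swap = -K p) : ∫ p, K p ∂μ.prod μ = 0 := by
  have h := integral_prod_swap (μ := μ) (ν := μ) K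
  simp only [hK, MeasureTheory.integral_neg] at h
  linarith

theorem gradE_eq_integral_sign {f : ℝ → ℝ} (hf : IntegrableOn f (Icc 0 1)) {x : ℝ}
    (hx : x ∈ Icc (0:ℝ) 1) :
    gradE f x = ∫ y in Icc (0:ℝ) 1, Real.sign (x - y) * f y := by
  have hsign : ∀ y, Real.sign (x - y) * f y = (Iio x).indicator f y - (Ioi x).indicator f y := by
    intro y
    rcases lt_trichotomy y x with h | rfl | h
    · simp [h, not_lt.mpr h.le, Real.sign_of_pos (sub_pos.mpr h)]
    · simp
    · simp [h, not_lt.mpr h.le, Real.sign_of_neg (sub_neg.mpr h)]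
  have hlo : Iio x ∩ Icc 0 1 = Ico 0 x := by
    ext y; simp only [mem_inter_iff, mem_Iio, mem_Icc, mem_Ico]; grind
  have hhi : Ioi x ∩ Icc 0 1 = Ioc x 1 := by
    ext y; simp only [mem_inter_iff, mem_Ioi, mem_Icc, mem_Ioc]; grind
  simp_rw [hsign]
  rw [integral_sub (hf.indicator measurableSet_Iio) (hf.indicator measurableSet_Ioi),
    MeasureTheory.integral_indicator measurableSet_Iio,
    MeasureTheory.integral_indicator measurableSet_Ioi,
    Measure.restrict_restrict measurableSet_Iio, Measure.restrict_restrict measurableSet_Ioi,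
    hlo, hhi, integral_Ico_eq_integral_Ioc, gradE, intervalIntegral.integral_of_le hx.1,
    intervalIntegral.integral_of_le hx.2]

theorem integral_mul_gradE_self {f : ℝ → ℝ} (hf : IntegrableOn f (Icc 0 1)) :
    ∫ x in Icc (0:ℝ) 1, f x * gradE f x = 0 := by
  set μ := volume.restrict (Icc (0:ℝ) 1)
  set K : ℝ × ℝ → ℝ := fun p => Real.sign (p.1 - p.2) * (f p.1 * f p.2)
  have hK : Integrable K (μ.prod μ) := by
    refine (hf.mul_prod hf).bdd_mul (c := 1)
      (Real.measurable_sign.comp (measurable_fst.sub measurable_snd)).aestronglyMeasurable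
      (Filter.Eventually.of_forall fun p => ?_)
    rcases Real.sign_apply_eq (p.1 - p.2) with h | h | h <;> simp [h]
  calc ∫ x in Icc (0:ℝ) 1, f x * gradE f x = ∫ x, ∫ y, K (x, y) ∂μ ∂μ := by
        refine setIntegral_congr_fun measurableSet_Icc fun x hx => ?_
        rw [gradE_eq_integral_sign hf hx, ← MeasureTheory.integral_const_mul]
        exact integral_congr_ae (Filter.Eventually.of_forall fun y => by simp only [K]; ring)
    _ = ∫ p, K p ∂μ.prod μ := (integral_prod K hK).symm
    _ = 0 := integral_prod_eq_zero_of_swap_eq_neg fun p => by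
        simp only [K, Prod.fst_swap, Prod.snd_swap, ← neg_sub p.1 p.2, Real.sign_neg]
        ring

theorem continuousOn_gradE_s11 {f : ℝ → ℝ} (hf : IntegrableOn f (Icc 0 1)) :
    ContinuousOn (gradE f) (Icc 0 1) := by
  rw [← uIcc_of_le zero_le_one] at hf ⊢
  exact (intervalIntegral.continuousOn_primitive_interval hf).sub
    (intervalIntegral.continuousOn_primitive_interval_left hf)

theorem integral_sub_half_sq : ∫ x in Icc (0:ℝ) 1, (x - 1/2) ^ 2 = 1/12 := by
  rw [setIntegral_Icc_eq_intervalIntegral zero_le_one]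
  norm_num [intervalIntegral.integral_comp_sub_right fun x : ℝ => x ^ 2]

theorem heav_of_nonneg {t : ℝ} (ht : 0 ≤ t) : heav t = 1 := if_pos ht

theorem heav_mul_self_of_nonpos {t : ℝ} (ht : t ≤ 0) : heav t * t = 0 := by
  rcases ht.lt_or_eq with h | rfl
  · simp [heav, not_le.mpr h]
  · simp

theorem wfun_eq_setIntegral (f : ℝ → ℝ) : wfun f = ∫ x in Icc (0:ℝ) 1, (x - 1/2) * f x :=
  (setIntegral_Icc_eq_intervalIntegral zero_le_one _).symm

theorem wfun_eq_zero_of_mca_eq_half_s11 {f : ℝ → ℝ} (hf : IntegrableOn f (Icc 0 1))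
    (hmass : ∫ x in (0:ℝ)..1, f x ≠ 0) (hmca : mca f = 1/2) : wfun f = 0 := by
  rw [mca, div_eq_iff hmass] at hmca
  have hxf : IntervalIntegrable (fun x => x * f x) volume 0 1 :=
    (intervalIntegrable_iff_integrableOn_Icc_of_le zero_le_one).mpr
      (hf.continuousOn_mul continuousOn_id isCompact_Icc)
  have hf' : IntervalIntegrable f volume 0 1 :=
    (intervalIntegrable_iff_integrableOn_Icc_of_le zero_le_one).mpr hf
  simp_rw [wfun, sub_mul]
  rw [intervalIntegral.integral_sub hxf (hf'.const_mul _), intervalIntegral.integral_const_mul,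
    hmca]
  ring

theorem integral_sub_half_mul_Aop_of_nonneg {f : ℝ → ℝ} (hf : IntegrableOn f (Icc 0 1))
    (hw : 0 ≤ wfun f) : ∫ x in Icc (0:ℝ) 1, (x - 1/2) * Aop f x = 0 := by
  set c := ∫ y in (0:ℝ)..1, (y - 1/2) * gradE f y
  have hgrad : IntegrableOn (fun x => (x - 1/2) * gradE f x) (Icc 0 1) :=
    ((continuous_id.sub continuous_const).continuousOn.mul (continuousOn_gradE_s11 hf)).integrableOn_Icc
  have hsq : IntegrableOn (fun x : ℝ => (x - 1/2) ^ 2) (Icc 0 1) :=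
    ((continuous_id.sub continuous_const).pow 2).continuousOn.integrableOn_Icc
  have hpt : ∀ x, (x - 1/2) * Aop f x = (x - 1/2) * gradE f x - 12 * c * (x - 1/2) ^ 2 := by
    intro x
    rw [Aop, heav_of_nonneg hw]
    ring
  simp_rw [hpt]
  rw [integral_sub hgrad (hsq.const_mul _), MeasureTheory.integral_const_mul, integral_sub_half_sq,
    setIntegral_Icc_eq_intervalIntegral zero_le_one]
  ring

theorem integral_mul_Aop_self_of_nonpos {f : ℝ → ℝ} (hf : IntegrableOn f (Icc 0 1))
    (hw : wfun f ≤ 0) : ∫ x in Icc (0:ℝ) 1, f x * Aop f x = 0 := by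
  set c := ∫ y in (0:ℝ)..1, (y - 1/2) * gradE f y
  have hgrad : IntegrableOn (fun x => f x * gradE f x) (Icc 0 1) :=
    hf.mul_continuousOn (continuousOn_gradE_s11 hf) isCompact_Icc
  have hweight : IntegrableOn (fun x => (x - 1/2) * f x) (Icc 0 1) :=
    hf.continuousOn_mul (continuous_id.sub continuous_const).continuousOn isCompact_Icc
  have hpt : ∀ x, f x * Aop f x =
      f x * gradE f x - 12 * c * heav (wfun f) * ((x - 1/2) * f x) := by
    intro x
    rw [Aop]
    ring
  simp_rw [hpt]
  rw [integral_sub hgrad (hweight.const_mul _), MeasureTheory.integral_const_mul,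
    integral_mul_gradE_self hf, ← wfun_eq_setIntegral, mul_assoc, heav_mul_self_of_nonpos hw]
  ring

section L2

variable {X : Type*} [MeasurableSpace X] {μ : Measure X}

theorem MeasureTheory.L2.real_inner_eq_integral (f g : Lp ℝ 2 μ) :
    inner ℝ f g = ∫ x, f x * g x ∂μ := by
  simp [L2.inner_def, mul_comm]

theorem HasDerivAt.integral_mul_Lp {φ : X → ℝ} (hφ : MemLp φ 2 μ) {α : ℝ → Lp ℝ 2 μ}
    {g : Lp ℝ 2 μ} {t : ℝ} (h : HasDerivAt α g t) :
    HasDerivAt (fun s => ∫ x, φ x * α s x ∂μ) (∫ x, φ x * g x ∂μ) t := by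
  have hinner : ∀ f : Lp ℝ 2 μ, ∫ x, φ x * f x ∂μ = innerSL ℝ (hφ.toLp φ) f := fun f => by
    rw [innerSL_apply_apply, L2.real_inner_eq_integral]
    exact integral_congr_ae (hφ.coeFn_toLp.mono fun x hx => by simp only [hx])
  simp only [hinner]
  exact (innerSL ℝ (hφ.toLp φ)).hasFDerivAt.comp_hasDerivAt t h

end L2

theorem nonpos_of_deriv_nonpos_of_pos {u u' : ℝ → ℝ} (h0 : u 0 ≤ 0)
    (hu : ∀ t, 0 ≤ t → HasDerivAt u (u' t) t) (hpos : ∀ t, 0 ≤ t → 0 < u t → u' t ≤ 0)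
    {t : ℝ} (ht : 0 ≤ t) : u t ≤ 0 := by
  have hbound : ∀ δ, 0 < δ → u t ≤ δ * (t + 1) := fun δ hδ =>
    image_le_of_deriv_right_lt_deriv_boundary (f' := u') (B := fun s => δ * (s + 1))
      (B' := fun _ => δ)
      (fun s hs => (hu s hs.1).continuousAt.continuousWithinAt)
      (fun s hs => (hu s hs.1).hasDerivWithinAt)
      (by linarith)
      (fun s => by simpa using ((hasDerivAt_id s).add_const 1).const_mul δ)
      (fun s hs hus => (hpos s hs.1 (hus ▸ mul_pos hδ (by linarith [hs.1]))).trans_lt hδ)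
      ⟨ht, le_rfl⟩
  by_contra! hneg
  have := hbound (u t / (2 * (t + 1))) (by positivity)
  rw [div_mul_eq_mul_div, mul_div_mul_right _ _ (by positivity : t + 1 ≠ 0)] at this
  linarith

/-- A solution of the constrained adaptive dynamics `α' = Aα` in `L²[0,1]`
starting from data with `MCA = 1/2` and nonzero total mass has constant
`L²` norm. -/
theorem stmt11
    (α : ℝ → Lp ℝ 2 (volume.restrict (Set.Icc (0:ℝ) 1)))
    (hsol : ∀ t : ℝ, 0 ≤ t →
        ∃ g : Lp ℝ 2 (volume.restrict (Set.Icc (0:ℝ) 1)),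
          (g : ℝ → ℝ) =ᵐ[volume.restrict (Set.Icc (0:ℝ) 1)] Aop (α t) ∧
          HasDerivAt α g t)
    (hmca : mca (α 0) = 1/2)
    (hint : (∫ x in (0:ℝ)..1, (α 0 : ℝ → ℝ) x) ≠ 0) :
    ∀ t : ℝ, 0 ≤ t → ‖α t‖ = ‖α 0‖ := by
  have hL1 : ∀ f : Lp ℝ 2 (volume.restrict (Icc (0:ℝ) 1)), IntegrableOn f (Icc 0 1) :=
    fun f => (Lp.memLp f).integrable one_le_two
  choose! g hgA hgα using hsol
  have hweight : MemLp (fun x : ℝ => x - 1/2) 2 (volume.restrict (Icc (0:ℝ) 1)) :=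
    MonotoneOn.memLp_isCompact isCompact_Icc fun x _ y _ hxy => by linarith
  have hg : ∀ s, 0 ≤ s → ∀ φ : ℝ → ℝ,
      ∫ x in Icc (0:ℝ) 1, φ x * g s x = ∫ x in Icc (0:ℝ) 1, φ x * Aop (α s) x := fun s hs φ =>
    integral_congr_ae ((hgA s hs).mono fun x hx => by simp only [hx])
  have hw : ∀ s, 0 ≤ s → HasDerivAt (fun r => wfun (α r))
      (∫ x in Icc (0:ℝ) 1, (x - 1/2) * Aop (α s) x) s := by
    intro s hs
    simp only [wfun_eq_setIntegral]
    rw [← hg s hs]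
    exact (hgα s hs).integral_mul_Lp hweight
  have hw_nonpos : ∀ s, 0 ≤ s → wfun (α s) ≤ 0 := fun s hs =>
    nonpos_of_deriv_nonpos_of_pos (wfun_eq_zero_of_mca_eq_half_s11 (hL1 _) hint hmca).le hw
      (fun r _ hpos => (integral_sub_half_mul_Aop_of_nonneg (hL1 _) hpos.le).le) hs
  have hnorm : ∀ s, 0 ≤ s → HasDerivAt (fun r => ‖α r‖ ^ 2) 0 s := by
    intro s hs
    convert (hgα s hs).norm_sq using 1
    rw [L2.real_inner_eq_integral, hg s hs,
      integral_mul_Aop_self_of_nonpos (hL1 _) (hw_nonpos s hs), mul_zero]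
  intro t ht
  have hconst := constant_of_has_deriv_right_zero
    (fun s hs => (hnorm s hs.1).continuousAt.continuousWithinAt)
    (fun s hs => (hnorm s hs.1).hasDerivWithinAt) t ⟨ht, le_rfl⟩
  exact (pow_left_inj₀ (norm_nonneg _) (norm_nonneg _) two_ne_zero).mp hconst
end

section
/- If u is a positive constant function on [0,1] and g ∈ L¹[0,1] with ∫₀¹ g ≠ 0, then E[u, g] = 2u·(1/2 − MCA(g))·∫₀¹ g(x) dx. In particular, if MCA(g) ≤ 1/2 and ∫₀¹ g > 0, then E[u,g] ≥ 0, so no strategy with MCA ≤ 1/2 defeats a constant strategy. -/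
open MeasureTheory intervalIntegral

/-- The payoff of the function-valued team game. -/
noncomputable def payoff (f g : ℝ → ℝ) : ℝ :=
  ∫ x in (0:ℝ)..1, f x * ((∫ y in (0:ℝ)..x, g y) - ∫ y in x..(1:ℝ), g y)

/-!
Against a constant strategy `u ≡ c` the integrand of `E[u, g]` is `c (2 G(x) - ∫₀¹ g)`, where
`G` is the primitive of `g`. Integrating the absolutely continuous `G` by parts against `x - 1`
gives `∫₀¹ G = ∫₀¹ (1 - y) g(y) dy`, hence `E[u, g] = c (∫₀¹ g - 2 ∫₀¹ x g(x) dx)`, which is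
`2c (1/2 - MCA(g)) ∫₀¹ g` once `∫₀¹ g ≠ 0`.
-/

theorem integral_primitive_eq_integral_sub_mul {g : ℝ → ℝ} {a b : ℝ}
    (hg : IntervalIntegrable g volume a b) :
    ∫ x in a..b, ∫ y in a..x, g y = ∫ y in a..b, (b - y) * g y := by
  have hG := hg.absolutelyContinuousOnInterval_intervalIntegral (c := a) Set.left_mem_uIcc
  have hlin : AbsolutelyContinuousOnInterval (fun x : ℝ => x - b) a b :=
    (contDiffOn_id.sub contDiffOn_const).absolutelyContinuousOnInterval
  have hparts := hlin.integral_mul_deriv_eq_deriv_mul hG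
  have hderiv : ∫ x in a..b, (x - b) * deriv (fun x => ∫ y in a..x, g y) x
      = ∫ x in a..b, (x - b) * g x := by
    apply intervalIntegral.integral_congr_ae
    filter_upwards [hg.ae_hasDerivAt_integral] with x hx hxab
    rw [(hx (Set.uIoc_subset_uIcc hxab) a Set.left_mem_uIcc).deriv]
  simp only [deriv_sub_const, deriv_id'', one_mul, sub_self, zero_mul, integral_same,
    mul_zero, zero_sub, hderiv] at hparts
  rw [← neg_eq_iff_eq_neg.mpr hparts, ← intervalIntegral.integral_neg]
  congr 1 with y
  ring

theorem payoff_const (c : ℝ) {g : ℝ → ℝ} (hg : IntervalIntegrable g volume 0 1) :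
    payoff (fun _ => c) g
      = c * ((∫ x in (0:ℝ)..1, g x) - 2 * ∫ x in (0:ℝ)..1, x * g x) := by
  have hpointwise :
      Set.EqOn (fun x => c * ((∫ y in (0:ℝ)..x, g y) - ∫ y in x..1, g y))
        (fun x => 2 * c * (∫ y in (0:ℝ)..x, g y) - c * ∫ y in (0:ℝ)..1, g y)
        (Set.uIcc 0 1) := by
    intro x hx
    have h0x : IntervalIntegrable g volume 0 x := hg.mono_set (Set.uIcc_subset_uIcc_left hx)
    simp only [← integral_interval_sub_left hg h0x]
    ring
  have hGint : IntervalIntegrable (fun x => ∫ y in (0:ℝ)..x, g y) volume 0 1 :=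
    (continuousOn_primitive_interval' hg Set.left_mem_uIcc).intervalIntegrable
  have hmoment : ∫ y in (0:ℝ)..1, (1 - y) * g y
      = (∫ y in (0:ℝ)..1, g y) - ∫ y in (0:ℝ)..1, y * g y := by
    have hxg : IntervalIntegrable (fun y => y * g y) volume 0 1 :=
      hg.continuousOn_mul continuousOn_id
    rw [← integral_sub hg hxg]
    congr 1 with y
    ring
  rw [payoff, integral_congr hpointwise,
    integral_sub (hGint.const_mul _) intervalIntegrable_const,
    intervalIntegral.integral_const_mul, integral_primitive_eq_integral_sub_mul hg, hmoment,
    intervalIntegral.integral_const, sub_zero, one_smul]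
  ring

/-- Payoff of a positive constant strategy `u ≡ c` against `g`:
`E[u,g] = 2c(1/2 − MCA(g))∫₀¹ g`; a constant strategy is not defeated by any
strategy with `MCA ≤ 1/2`. -/
theorem stmt13 (c : ℝ) (hc : 0 < c) (g : ℝ → ℝ)
    (hg : IntegrableOn g (Set.Icc (0:ℝ) 1))
    (hint : (∫ x in (0:ℝ)..1, g x) ≠ 0) :
    payoff (fun _ => c) g = 2 * c * (1/2 - mca g) * ∫ x in (0:ℝ)..1, g x ∧
    (mca g ≤ 1/2 → 0 < ∫ x in (0:ℝ)..1, g x → 0 ≤ payoff (fun _ => c) g) := by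
  have hformula : payoff (fun _ => c) g = 2 * c * (1/2 - mca g) * ∫ x in (0:ℝ)..1, g x := by
    rw [payoff_const c ((intervalIntegrable_iff_integrableOn_Icc_of_le zero_le_one).2 hg), mca]
    field_simp
  refine ⟨hformula, fun hmca _ => ?_⟩
  have hgap : 0 ≤ 1/2 - mca g := by linarith
  rw [hformula]
  positivity
end

section
/- Let L be the (M+1)×(M+1) matrix with L_{ij} = −1 for i < j, L_{ij} = 1 for i > j, and 0 on the diagonal. Then rank(L) = M + 1 if M + 1 is even, and rank(L) = M if M + 1 is odd; in the odd case the kernel is spanned by the alternating vector (1, −1, 1, −1, ..., 1). -/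
/-!
Consecutive rows of `L` differ by `eᵢ + eᵢ₊₁`, so `L x = 0` forces `xᵢ₊₁ = -xᵢ`: every kernel
vector is a multiple of the alternating vector `a`. The same row relation shows that `L a` is
constant, equal to its first entry `a₀ - ∑ a = 1 - ∑ a`, which vanishes exactly when `M + 1` is
odd. So the kernel is `span {a}` or `0`, and rank–nullity gives the rank.
-/

/-- The skew-symmetric matrix of the discrete selection gradient:
`−1` above the diagonal, `1` below, `0` on the diagonal. -/
def Lmat (M : ℕ) : Matrix (Fin (M+1)) (Fin (M+1)) ℝ :=
  Matrix.of fun i j => if i < j then -1 else if j < i then 1 else 0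

open Matrix Module

theorem Matrix.rank_add_finrank_ker_mulVecLin {m n K : Type*} [Fintype n] [Field K]
    (A : Matrix m n K) :
    A.rank + finrank K (LinearMap.ker A.mulVecLin) = Fintype.card n := by
  rw [Matrix.rank, LinearMap.finrank_range_add_finrank_ker, finrank_fintype_fun_eq_card]

theorem Fin.eq_smul_neg_one_pow_of_succ_eq_neg {R : Type*} [Ring R] {n : ℕ} {x : Fin (n + 1) → R}
    (hx : ∀ i : Fin n, x i.succ = -x i.castSucc) :
    x = x 0 • fun i : Fin (n + 1) => (-1 : R) ^ (i : ℕ) := by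
  funext i
  induction i using Fin.induction with
  | zero => simp
  | succ i ih => simp_all [pow_succ]

lemma Lmat_zero_row (M : ℕ) : Lmat M 0 = Pi.single 0 1 - 1 := by
  funext j
  rcases Fin.eq_zero_or_eq_succ j with rfl | ⟨j, rfl⟩
  · simp [Lmat]
  · simp [Lmat, Fin.succ_pos]

lemma Lmat_succ_row_sub (M : ℕ) (i : Fin M) :
    Lmat M i.succ - Lmat M i.castSucc = Pi.single i.castSucc 1 + Pi.single i.succ 1 := by
  funext j
  simp only [Lmat, Pi.sub_apply, Pi.add_apply, Matrix.of_apply, Pi.single_apply, Fin.lt_def,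
    Fin.ext_iff, Fin.val_succ, Fin.val_castSucc]
  split_ifs <;> first | omega | norm_num

lemma Lmat_mulVec_zero (M : ℕ) (x : Fin (M + 1) → ℝ) :
    (Lmat M *ᵥ x) 0 = x 0 - ∑ j, x j := by
  rw [mulVec, Lmat_zero_row, sub_dotProduct, single_dotProduct, one_dotProduct, one_mul]

lemma Lmat_mulVec_succ_sub (M : ℕ) (x : Fin (M + 1) → ℝ) (i : Fin M) :
    (Lmat M *ᵥ x) i.succ - (Lmat M *ᵥ x) i.castSucc = x i.castSucc + x i.succ := by
  rw [mulVec, mulVec, ← sub_dotProduct, Lmat_succ_row_sub, add_dotProduct, single_dotProduct,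
    single_dotProduct, one_mul, one_mul]

lemma Lmat_mulVec_neg_one_pow (M : ℕ) :
    Lmat M *ᵥ (fun i : Fin (M + 1) => (-1 : ℝ) ^ (i : ℕ)) =
      fun _ => 1 - ∑ j : Fin (M + 1), (-1 : ℝ) ^ (j : ℕ) := by
  funext i
  induction i using Fin.induction with
  | zero => simp [Lmat_mulVec_zero]
  | succ i ih =>
    have h := Lmat_mulVec_succ_sub M (fun i : Fin (M + 1) => (-1 : ℝ) ^ (i : ℕ)) i
    simp only [Fin.val_succ, Fin.val_castSucc, pow_succ, mul_neg_one, add_neg_cancel] at h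
    rw [sub_eq_zero.mp h, ih]

lemma eq_smul_neg_one_pow_of_Lmat_mulVec_eq_zero {M : ℕ} {x : Fin (M + 1) → ℝ}
    (hx : Lmat M *ᵥ x = 0) : x = x 0 • fun i : Fin (M + 1) => (-1 : ℝ) ^ (i : ℕ) := by
  refine Fin.eq_smul_neg_one_pow_of_succ_eq_neg fun i => ?_
  have h := Lmat_mulVec_succ_sub M x i
  rw [hx, Pi.zero_apply, Pi.zero_apply, sub_zero] at h
  linarith

lemma ker_Lmat_of_even {M : ℕ} (hM : Even (M + 1)) : LinearMap.ker (Lmat M).mulVecLin = ⊥ := by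
  refine eq_bot_iff.mpr fun x hx => ?_
  replace hx : Lmat M *ᵥ x = 0 := hx
  have hx0 : x 0 = 0 := by
    have h := congrFun hx 0
    rw [eq_smul_neg_one_pow_of_Lmat_mulVec_eq_zero hx, mulVec_smul, Lmat_mulVec_neg_one_pow,
      Fin.sum_neg_one_pow ℝ, if_pos hM] at h
    simpa using h
  rw [Submodule.mem_bot, eq_smul_neg_one_pow_of_Lmat_mulVec_eq_zero hx, hx0, zero_smul]

lemma ker_Lmat_of_odd {M : ℕ} (hM : Odd (M + 1)) :
    LinearMap.ker (Lmat M).mulVecLin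
      = Submodule.span ℝ {fun i : Fin (M + 1) => (-1 : ℝ) ^ (i : ℕ)} := by
  apply le_antisymm
  · exact fun x hx =>
      Submodule.mem_span_singleton.mpr ⟨x 0, (eq_smul_neg_one_pow_of_Lmat_mulVec_eq_zero hx).symm⟩
  · rw [Submodule.span_le, Set.singleton_subset_iff, SetLike.mem_coe, LinearMap.mem_ker,
      mulVecLin_apply, Lmat_mulVec_neg_one_pow, Fin.sum_neg_one_pow ℝ,
      if_neg (Nat.not_even_iff_odd.mpr hM), sub_self]
    rfl

theorem stmt15 (M : ℕ) :
    (Even (M + 1) → (Lmat M).rank = M + 1) ∧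
    (Odd (M + 1) →
      (Lmat M).rank = M ∧
      LinearMap.ker (Lmat M).mulVecLin
        = Submodule.span ℝ {fun i : Fin (M+1) => ((-1 : ℝ)) ^ (i : ℕ)}) := by
  have hrank := (Lmat M).rank_add_finrank_ker_mulVecLin
  rw [Fintype.card_fin] at hrank
  refine ⟨fun hM => ?_, fun hM => ⟨?_, ker_Lmat_of_odd hM⟩⟩
  · rwa [ker_Lmat_of_even hM, finrank_bot, add_zero] at hrank
  · have hne : (fun i : Fin (M + 1) => (-1 : ℝ) ^ (i : ℕ)) ≠ 0 :=
      fun h => by simpa using congrFun h 0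
    rw [ker_Lmat_of_odd hM, finrank_span_singleton hne] at hrank
    omega
end

section
/- Let Q be a real projection matrix (Q² = Q, Q symmetric) and S a real skew-symmetric matrix of the same size n×n. Then every eigenvalue of QS is purely imaginary (i.e., lies in iℝ). -/
/-!
Since `Q` is idempotent, `QS = Q (QS)` and `(QS) Q` have the same characteristic polynomial,
so `QS` has the same eigenvalues as `QSQ = QᵀSQ`, which is again skew-symmetric.
For a skew-Hermitian `A` the matrix `i A` is Hermitian, so `i μ` is real for every eigenvalue
`μ` of `A`.
-/

open Matrix

namespace Matrix

variable {n : Type*}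

theorem conjTranspose_map_ofReal_eq_neg {S : Matrix n n ℝ} (hS : Sᵀ = -S) :
    (S.map ((↑) : ℝ → ℂ))ᴴ = -S.map ((↑) : ℝ → ℂ) := by
  rw [← conjTranspose_map _ fun x => (Complex.conj_ofReal x).symm,
    conjTranspose_eq_transpose_of_trivial, hS, Matrix.map_neg _ Complex.ofReal_neg]

variable [Fintype n]

theorem transpose_mul_mul_self_eq_neg {R : Type*} [CommRing R] {S : Matrix n n R}
    (hS : Sᵀ = -S) (M : Matrix n n R) : (Mᵀ * S * M)ᵀ = -(Mᵀ * S * M) := by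
  rw [transpose_mul, transpose_mul, transpose_transpose, hS]
  simp only [Matrix.neg_mul, Matrix.mul_neg, Matrix.mul_assoc]

variable [DecidableEq n]

theorem charpoly_mul_eq_charpoly_mul_mul_of_idempotent {R : Type*} [CommRing R]
    {P : Matrix n n R} (hP : P * P = P) (M : Matrix n n R) :
    (P * M).charpoly = (P * M * P).charpoly :=
  calc (P * M).charpoly = (P * (P * M)).charpoly := by rw [← Matrix.mul_assoc, hP]
    _ = (P * M * P).charpoly := charpoly_mul_comm _ _

theorem re_eq_zero_of_mem_spectrum_of_conjTranspose_eq_neg {A : Matrix n n ℂ} (hA : Aᴴ = -A)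
    {μ : ℂ} (hμ : μ ∈ spectrum ℂ A) : μ.re = 0 := by
  have hHerm : (Complex.I • A).IsHermitian := by
    rw [IsHermitian, conjTranspose_smul, hA, smul_neg, ← neg_smul, Complex.star_def,
      Complex.conj_I, neg_neg]
  have hIμ : Complex.I * μ ∈ spectrum ℂ (Complex.I • A) :=
    spectrum.smul_mem_smul_iff (r := Units.mk0 Complex.I Complex.I_ne_zero) |>.mpr hμ
  obtain ⟨r, -, hr⟩ := hHerm.spectrum_eq_image_range ▸ hIμ
  simpa using (congrArg Complex.im hr).symm

end Matrix

/-- If `Q` is a real projection matrix and `S` a real skew-symmetric matrix,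
then every complex eigenvalue of `QS` is purely imaginary. -/
theorem stmt17 (n : ℕ) (Q S : Matrix (Fin n) (Fin n) ℝ)
    (hQproj : Q * Q = Q) (hQsymm : Qᵀ = Q) (hSskew : Sᵀ = -S)
    (μ : ℂ)
    (hμ : (Matrix.charpoly ((Q * S).map (fun x : ℝ => (x : ℂ)))).IsRoot μ) :
    μ.re = 0 := by
  have hchar : (Q * S).charpoly = (Qᵀ * S * Q).charpoly := by
    rw [hQsymm]
    exact charpoly_mul_eq_charpoly_mul_mul_of_idempotent hQproj S
  change ((Q * S).map Complex.ofRealHom).charpoly.IsRoot μ at hμ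
  rw [charpoly_map, hchar, ← charpoly_map] at hμ
  exact re_eq_zero_of_mem_spectrum_of_conjTranspose_eq_neg
    (conjTranspose_map_ofReal_eq_neg (transpose_mul_mul_self_eq_neg hSskew Q))
    (mem_spectrum_iff_isRoot_charpoly.mpr hμ)
end
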